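/- If H is a planar graph and F is a non-planar graph, then no region intersection graph over H contains the 1-subdivision F^(1) of F as an induced minor. -/

import Mathlib

/-- A set of vertices is connected in `G` if the induced subgraph is connected
(in particular, it is nonempty). -/
def ConnectedIn {V : Type*} (G : SimpleGraph V) (S : Set V) : Prop :=
  (G.induce S).Connected

/-- `H` is a minor of `G`: there is a minor model of `H` in `G`, i.e. a family of
nonempty, connected, pairwise disjoint branch sets, with an edge of `G` between the
branch sets of any two vertices adjacent in `H`. -/
def IsMinor {α β : Type*} (H : SimpleGraph α) (G : SimpleGraph β) : Prop :=
  ∃ φ : α → Set β,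
    (∀ a, ConnectedIn G (φ a)) ∧
    (Pairwise fun a b => Disjoint (φ a) (φ b)) ∧
    (∀ a b : α, H.Adj a b → ∃ u ∈ φ a, ∃ v ∈ φ b, G.Adj u v)

/-- `H` is an induced minor of `G`: as for a minor model, but two distinct branch sets
are joined by an edge of `G` *iff* the corresponding vertices are adjacent in `H`. -/
def IsInducedMinor {α β : Type*} (H : SimpleGraph α) (G : SimpleGraph β) : Prop :=
  ∃ φ : α → Set β,
    (∀ a, ConnectedIn G (φ a)) ∧
    (Pairwise fun a b => Disjoint (φ a) (φ b)) ∧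
    (∀ a b : α, a ≠ b → (H.Adj a b ↔ ∃ u ∈ φ a, ∃ v ∈ φ b, G.Adj u v))

/-- `G` is a region intersection graph over `H`: every vertex `v` of `G` is assigned a
connected subgraph (region) `R v` of `H` such that two distinct vertices of `G` are
adjacent iff their regions intersect. -/
def IsRIG {α β : Type*} (G : SimpleGraph α) (H : SimpleGraph β) : Prop :=
  ∃ R : α → Set β,
    (∀ v, ConnectedIn H (R v)) ∧
    (∀ u v : α, u ≠ v → (G.Adj u v ↔ (R u ∩ R v).Nonempty))

/-- Identification relation used to build the internal vertices of the `ℓ`-subdivision: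
the `i`-th internal vertex of the edge directed as `(u, v)` equals the `(ℓ-1-i)`-th
internal vertex of the edge directed as `(v, u)`. -/
def SubdivRel {V : Type*} (G : SimpleGraph V) (ℓ : ℕ) :
    ({d : V × V // G.Adj d.1 d.2} × Fin ℓ) → ({d : V × V // G.Adj d.1 d.2} × Fin ℓ) → Prop :=
  fun a b => a.1.1.1 = b.1.1.2 ∧ a.1.1.2 = b.1.1.1 ∧ (a.2 : ℕ) + (b.2 : ℕ) + 1 = ℓ

/-- Vertices of the `ℓ`-subdivision of `G`: the branching (original) vertices together
with `ℓ` internal (subdivision) vertices on each edge. -/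
def SubdivVert {V : Type*} (G : SimpleGraph V) (ℓ : ℕ) : Type _ :=
  V ⊕ Quot (SubdivRel G ℓ)

/-- The `ℓ`-subdivision `G^(ℓ)` of `G`: every edge of `G` is replaced by a path with
`ℓ + 1` edges (so with `ℓ` new internal vertices). -/
def subdiv {V : Type*} (G : SimpleGraph V) (ℓ : ℕ) : SimpleGraph (SubdivVert G ℓ) :=
  SimpleGraph.fromRel (fun x y =>
    (ℓ = 0 ∧ ∃ u v : V, G.Adj u v ∧ x = Sum.inl u ∧ y = Sum.inl v) ∨
    (∃ (d : {d : V × V // G.Adj d.1 d.2}) (i : Fin ℓ),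
      (i : ℕ) = 0 ∧ x = Sum.inl d.1.1 ∧ y = Sum.inr (Quot.mk _ (d, i))) ∨
    (∃ (d : {d : V × V // G.Adj d.1 d.2}) (i j : Fin ℓ),
      (i : ℕ) + 1 = (j : ℕ) ∧ x = Sum.inr (Quot.mk _ (d, i)) ∧ y = Sum.inr (Quot.mk _ (d, j))))

/-- A graph is planar iff it has no `K_5` minor and no `K_{3,3}` minor
(Wagner's characterization of planarity). -/
def IsPlanar {V : Type*} (G : SimpleGraph V) : Prop :=
  ¬ IsMinor (SimpleGraph.completeGraph (Fin 5)) G ∧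
  ¬ IsMinor (completeBipartiteGraph (Fin 3) (Fin 3)) G

/-!
Composing the regions with the branch sets of an induced-minor model shows that `F^(1)` is itself
a region intersection graph over `H`. For an edge `ab` of `F`, the region of its subdivision vertex
meets the (disjoint) regions of `a` and `b`; a walk inside it, cut just before it first enters the
region of `b`, is a connected connector from the region of `a` to a neighbour of the region of `b`.
Orienting the edges of `F` by a well-order and attaching to the region of each `a` the connectors
of the edges `ab` with `a < b` gives a minor model of `F` in `H`, so `F` would inherit planarity
from `H`.
-/

open SimpleGraph

section ConnectedIn

variable {V : Type*} {G : SimpleGraph V}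

theorem ConnectedIn.nonempty {S : Set V} (h : ConnectedIn G S) : S.Nonempty :=
  Set.nonempty_coe_sort.1 (Connected.nonempty h)

theorem ConnectedIn.reachable {S T : Set V} (h : ConnectedIn G S) (hST : S ⊆ T) {u v : V}
    (hu : u ∈ S) (hv : v ∈ S) : (G.induce T).Reachable ⟨u, hST hu⟩ ⟨v, hST hv⟩ :=
  (h.preconnected ⟨u, hu⟩ ⟨v, hv⟩).map (induceHomOfLE G hST).toHom

theorem connectedIn_iUnion {ι : Type*} {K : SimpleGraph ι} (hK : K.Connected) {S : ι → Set V}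
    (hS : ∀ i, ConnectedIn G (S i)) (hlink : ∀ i j, K.Adj i j → ConnectedIn G (S i ∪ S j)) :
    ConnectedIn G (⋃ i, S i) := by
  have key : ∀ {i j} (w : K.Walk i j) {u v : V} (hu : u ∈ S i) (hv : v ∈ S j),
      (G.induce (⋃ i, S i)).Reachable ⟨u, Set.mem_iUnion_of_mem i hu⟩
        ⟨v, Set.mem_iUnion_of_mem j hv⟩ := by
    intro i j w
    induction w with
    | nil => exact fun hu hv => (hS _).reachable (Set.subset_iUnion S _) hu hv
    | @cons i k j hik _ ih =>
      intro u v hu hv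
      obtain ⟨b, hb⟩ := (hS k).nonempty
      have hsub : S i ∪ S k ⊆ ⋃ i, S i :=
        Set.union_subset (Set.subset_iUnion S i) (Set.subset_iUnion S k)
      exact ((hlink i k hik).reachable hsub (Or.inl hu) (Or.inr hb)).trans (ih hb hv)
  obtain ⟨i₀⟩ := hK.nonempty
  obtain ⟨u₀, hu₀⟩ := (hS i₀).nonempty
  refine (connected_iff_exists_forall_reachable _).2 ⟨⟨u₀, Set.mem_iUnion_of_mem i₀ hu₀⟩, ?_⟩
  rintro ⟨v, hv⟩
  obtain ⟨j, hvj⟩ := Set.mem_iUnion.1 hv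
  obtain ⟨w⟩ := hK.preconnected i₀ j
  exact key w hu₀ hvj

theorem ConnectedIn.union_iUnion {ι : Type*} {C : Set V} (hC : ConnectedIn G C) {S : ι → Set V}
    (hS : ∀ i, ConnectedIn G (S i)) (hSC : ∀ i, (S i ∩ C).Nonempty) :
    ConnectedIn G (C ∪ ⋃ i, S i) := by
  obtain ⟨u, hu⟩ := hC.nonempty
  refine induce_connected_of_patches u (Or.inl hu) fun {v} hv => ?_
  rcases hv with hv | hv
  · exact ⟨C, Set.subset_union_left, hu, hv, hC.preconnected _ _⟩
  · obtain ⟨i, hvi⟩ := Set.mem_iUnion.1 hv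
    have hCS : ConnectedIn G (C ∪ S i) :=
      induce_union_connected hC.preconnected (hS i).preconnected (Set.inter_comm _ _ ▸ hSC i)
    exact ⟨C ∪ S i, Set.union_subset_union_right _ (Set.subset_iUnion S i), Or.inl hu, Or.inr hvi,
      hCS.preconnected _ _⟩

theorem SimpleGraph.Walk.exists_avoiding_prefix_adj {B : Set V} {x y : V} (w : G.Walk x y)
    (hx : x ∉ B) (hy : y ∈ B) :
    ∃ z, ∃ p : G.Walk x z, (∀ v ∈ p.support, v ∈ w.support ∧ v ∉ B) ∧ ∃ t ∈ B, G.Adj z t := by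
  induction w with
  | nil => exact absurd hy hx
  | @cons x b y hxb p ih =>
    by_cases hb : b ∈ B
    · refine ⟨x, .nil, ?_, b, hb, hxb⟩
      simpa using hx
    · obtain ⟨z, q, hq, t, ht, hzt⟩ := ih hb hy
      refine ⟨z, .cons hxb q, ?_, t, ht, hzt⟩
      intro v hv
      rcases List.mem_cons.1 hv with rfl | hv
      · exact ⟨Walk.start_mem_support _, hx⟩
      · exact ⟨List.mem_cons_of_mem _ (hq v hv).1, (hq v hv).2⟩

theorem ConnectedIn.exists_connectedIn_subset_adj {C A B : Set V} (hC : ConnectedIn G C)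
    (hA : (C ∩ A).Nonempty) (hB : (C ∩ B).Nonempty) (hAB : Disjoint A B) :
    ∃ P ⊆ C, ConnectedIn G P ∧ (P ∩ A).Nonempty ∧ Disjoint P B ∧
      ∃ z ∈ P, ∃ t ∈ B, G.Adj z t := by
  obtain ⟨x, hxC, hxA⟩ := hA
  obtain ⟨y, hyC, hyB⟩ := hB
  obtain ⟨w⟩ := hC.preconnected ⟨x, hxC⟩ ⟨y, hyC⟩
  obtain ⟨z, p, hp, t, ht, hzt⟩ := (w.map (Embedding.induce C).toHom).exists_avoiding_prefix_adj
    (hAB.notMem_of_mem_left hxA) hyB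
  refine ⟨{v | v ∈ p.support}, fun v hv => ?_, p.connected_induce_support,
    ⟨x, p.start_mem_support, hxA⟩, Set.disjoint_left.2 fun v hv => (hp v hv).2,
    z, p.end_mem_support, t, ht, hzt⟩
  have hvw := (hp v hv).1
  rw [Walk.support_map, List.mem_map] at hvw
  obtain ⟨s, -, rfl⟩ := hvw
  exact s.2

end ConnectedIn

section Minor

variable {α β γ : Type*} {H : SimpleGraph α} {F : SimpleGraph β}

theorem IsMinor.trans {K : SimpleGraph γ} (h₁ : IsMinor K F) (h₂ : IsMinor F H) :
    IsMinor K H := by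
  obtain ⟨φ, hφ, hφdisj, hφadj⟩ := h₁
  obtain ⟨ψ, hψ, hψdisj, hψadj⟩ := h₂
  refine ⟨fun k => ⋃ a : φ k, ψ a, fun k => connectedIn_iUnion (hφ k) (fun a => hψ a)
    fun a b hab => ?_, fun k k' hkk' => ?_, fun k k' hkk' => ?_⟩
  · obtain ⟨u, hu, v, hv, huv⟩ := hψadj a b hab
    exact connected_induce_union (hψ a).preconnected (hψ b).preconnected hu hv huv
  · refine Set.disjoint_iUnion_left.2 fun a => Set.disjoint_iUnion_right.2 fun b =>
      hψdisj fun hab => ?_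
    exact Set.disjoint_left.1 (hφdisj hkk') a.2 (hab ▸ b.2)
  · obtain ⟨a, ha, b, hb, hab⟩ := hφadj k k' hkk'
    obtain ⟨u, hu, v, hv, huv⟩ := hψadj a b hab
    exact ⟨u, Set.mem_iUnion.2 ⟨⟨a, ha⟩, hu⟩, v, Set.mem_iUnion.2 ⟨⟨b, hb⟩, hv⟩, huv⟩

theorem IsPlanar.of_isMinor (hH : IsPlanar H) (hFH : IsMinor F H) : IsPlanar F :=
  ⟨fun h => hH.1 (h.trans hFH), fun h => hH.2 (h.trans hFH)⟩

theorem IsRIG.of_isInducedMinor {G : SimpleGraph γ} {δ : Type*} {K : SimpleGraph δ}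
    (hG : IsRIG G H) (hK : IsInducedMinor K G) : IsRIG K H := by
  obtain ⟨R, hR, hRadj⟩ := hG
  obtain ⟨φ, hφ, hφdisj, hφadj⟩ := hK
  refine ⟨fun x => ⋃ u : φ x, R u, fun x => connectedIn_iUnion (hφ x) (fun u => hR u)
    fun u v huv => ?_, fun x y hxy => ?_⟩
  · have huv : G.Adj u v := huv
    exact induce_union_connected (hR u).preconnected (hR v).preconnected
      ((hRadj u v huv.ne).1 huv)
  · rw [hφadj x y hxy]
    constructor
    · rintro ⟨u, hu, v, hv, huv⟩
      obtain ⟨p, hpu, hpv⟩ := (hRadj u v huv.ne).1 huv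
      exact ⟨p, Set.mem_iUnion.2 ⟨⟨u, hu⟩, hpu⟩, Set.mem_iUnion.2 ⟨⟨v, hv⟩, hpv⟩⟩
    · rintro ⟨p, hpx, hpy⟩
      obtain ⟨⟨u, hu⟩, hpu⟩ := Set.mem_iUnion.1 hpx
      obtain ⟨⟨v, hv⟩, hpv⟩ := Set.mem_iUnion.1 hpy
      have huv : u ≠ v := fun h => Set.disjoint_left.1 (hφdisj hxy) hu (h ▸ hv)
      exact ⟨u, hu, v, hv, (hRadj u v huv).2 ⟨p, hpu, hpv⟩⟩

theorem isMinor_of_connectors (B : β → Set α) (P : ∀ a b, F.Adj a b → Set α)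
    (hB : ∀ a, ConnectedIn H (B a)) (hBB : Pairwise fun a c => Disjoint (B a) (B c))
    (hP : ∀ a b (h : F.Adj a b), ConnectedIn H (P a b h))
    (hPB : ∀ a b (h : F.Adj a b), (P a b h ∩ B a).Nonempty)
    (hPadj : ∀ a b (h : F.Adj a b), ∃ z ∈ P a b h, ∃ t ∈ B b, H.Adj z t)
    (hPB' : ∀ a b c (h : F.Adj a b), c ≠ a → Disjoint (P a b h) (B c))
    (hPP : ∀ a b c d (h : F.Adj a b) (h' : F.Adj c d), s(a, b) ≠ s(c, d) →
      Disjoint (P a b h) (P c d h')) :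
    IsMinor F H := by
  let _ : LinearOrder β := IsWellOrder.linearOrder WellOrderingRel
  -- `P a b` and `P b a` may meet, so each edge keeps only the connector leaving its smaller end.
  let Q : β → Set α := fun a => ⋃ b : {b // ∃ h : F.Adj a b, a < b}, P a b b.2.1
  have hQB : ∀ a c, a ≠ c → Disjoint (Q a) (B c) := fun a c hac =>
    Set.disjoint_iUnion_left.2 fun b => hPB' _ _ _ _ hac.symm
  have hQQ : ∀ a c, a ≠ c → Disjoint (Q a) (Q c) := by
    rintro a c hac
    refine Set.disjoint_iUnion_left.2 fun ⟨b, _, hab⟩ =>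
      Set.disjoint_iUnion_right.2 fun ⟨d, _, hcd⟩ => hPP _ _ _ _ _ _ fun h => ?_
    rcases Sym2.eq_iff.1 h with ⟨hac', -⟩ | ⟨rfl, rfl⟩
    exacts [hac hac', lt_asymm hab hcd]
  refine ⟨fun a => B a ∪ Q a, fun a => (hB a).union_iUnion (fun b => hP _ _ _)
    (fun b => hPB _ _ _), fun a c hac => ?_, fun a b hab => ?_⟩
  · exact Disjoint.union_left ((hBB hac).union_right (hQB c a hac.symm).symm)
      ((hQB a c hac).union_right (hQQ a c hac))
  · rcases lt_or_gt_of_ne hab.ne with hlt | hlt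
    · obtain ⟨z, hz, t, ht, hzt⟩ := hPadj a b hab
      exact ⟨z, Or.inr (Set.mem_iUnion.2 ⟨⟨b, hab, hlt⟩, hz⟩), t, Or.inl ht, hzt⟩
    · obtain ⟨z, hz, t, ht, hzt⟩ := hPadj b a hab.symm
      exact ⟨t, Or.inl ht, z, Or.inr (Set.mem_iUnion.2 ⟨⟨a, hab.symm, hlt⟩, hz⟩), hzt.symm⟩

end Minor

section Subdivision

variable {β : Type*} {F : SimpleGraph β}

def subdivMidpoint {a b : β} (h : F.Adj a b) : SubdivVert F 1 :=
  Sum.inr (Quot.mk _ (⟨(a, b), h⟩, 0))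

theorem subdivMidpoint_symm {a b : β} (h : F.Adj a b) : subdivMidpoint h.symm = subdivMidpoint h :=
  congrArg Sum.inr (Quot.sound ⟨rfl, rfl, rfl⟩)

def subdivEdge {ℓ : ℕ} : Quot (SubdivRel F ℓ) → Sym2 β :=
  Quot.lift (fun p => s(p.1.1.1, p.1.1.2)) fun _ _ h => by rw [h.1, h.2.1]; exact Sym2.eq_swap

theorem eq_of_subdivMidpoint_eq {a b c d : β} {h : F.Adj a b} {h' : F.Adj c d}
    (heq : subdivMidpoint h = subdivMidpoint h') : s(a, b) = s(c, d) :=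
  congrArg subdivEdge (Sum.inr_injective heq)

theorem subdiv_not_adj_inl_inl {ℓ : ℕ} (hℓ : ℓ ≠ 0) (a b : β) :
    ¬ (subdiv F ℓ).Adj (Sum.inl a) (Sum.inl b) := by
  intro h
  rcases ((fromRel_adj _ _ _).1 h).2 with h | h
  all_goals rcases h with ⟨h0, -⟩ | ⟨d, i, -, -, hy⟩ | ⟨d, i, j, -, hx, -⟩
  all_goals first | exact hℓ h0 | exact Sum.inl_ne_inr hy | exact Sum.inl_ne_inr hx

theorem subdiv_one_not_adj_inr_inr (q q' : Quot (SubdivRel F 1)) :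
    ¬ (subdiv F 1).Adj (Sum.inr q) (Sum.inr q') := by
  intro h
  rcases ((fromRel_adj _ _ _).1 h).2 with h | h
  all_goals rcases h with ⟨h0, -⟩ | ⟨d, i, -, hx, -⟩ | ⟨d, i, j, hij, -, -⟩
  all_goals first | exact one_ne_zero h0 | exact Sum.inr_ne_inl hx | omega

theorem subdiv_one_adj_subdivMidpoint {a b : β} (h : F.Adj a b) :
    (subdiv F 1).Adj (Sum.inl a) (subdivMidpoint h) :=
  (fromRel_adj _ _ _).2 ⟨Sum.inl_ne_inr, .inl (.inr (.inl ⟨⟨(a, b), h⟩, 0, rfl, rfl, rfl⟩))⟩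

theorem mem_subdivEdge_of_subdiv_adj {ℓ : ℕ} {c : β} {q : Quot (SubdivRel F ℓ)}
    (h : (subdiv F ℓ).Adj (Sum.inl c) (Sum.inr q)) : c ∈ subdivEdge q := by
  rcases ((fromRel_adj _ _ _).1 h).2 with h | h
  all_goals rcases h with ⟨-, u, v, -, hx, hy⟩ | ⟨d, i, -, hx, hy⟩ | ⟨d, i, j, -, hx, hy⟩
  all_goals cases hx <;> cases hy
  exact Sym2.mem_mk_left _ _

variable {α : Type*} {H : SimpleGraph α}

theorem IsRIG.isMinor_of_subdiv_one (h : IsRIG (subdiv F 1) H) : IsMinor F H := by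
  obtain ⟨T, hT, hTadj⟩ := h
  have hmeet : ∀ x y, (subdiv F 1).Adj x y → (T x ∩ T y).Nonempty := fun x y h =>
    (hTadj x y h.ne).1 h
  have hdisj : ∀ x y, x ≠ y → ¬ (subdiv F 1).Adj x y → Disjoint (T x) (T y) := fun x y hxy hn =>
    by_contra fun h => hn ((hTadj x y hxy).2 (Set.not_disjoint_iff_nonempty_inter.1 h))
  have hTT : Pairwise fun a c => Disjoint (T (Sum.inl a)) (T (Sum.inl c)) := fun a c hac =>
    hdisj _ _ (Sum.inl_injective.ne hac) (subdiv_not_adj_inl_inl one_ne_zero a c)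
  have hconn : ∀ a b (h : F.Adj a b), ∃ P ⊆ T (subdivMidpoint h), ConnectedIn H P ∧
      (P ∩ T (Sum.inl a)).Nonempty ∧ Disjoint P (T (Sum.inl b)) ∧
      ∃ z ∈ P, ∃ t ∈ T (Sum.inl b), H.Adj z t := by
    intro a b h
    have hb := hmeet _ _ (subdiv_one_adj_subdivMidpoint h.symm).symm
    rw [subdivMidpoint_symm h] at hb
    exact (hT _).exists_connectedIn_subset_adj
      (hmeet _ _ (subdiv_one_adj_subdivMidpoint h).symm) hb (hTT h.ne)
  choose P hPT hP hPa hPb hPadj using hconn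
  refine isMinor_of_connectors (fun a => T (Sum.inl a)) P (fun a => hT _) hTT hP hPa hPadj ?_ ?_
  · intro a b c h hca
    rcases eq_or_ne c b with rfl | hcb
    · exact hPb a c h
    refine (hdisj _ _ Sum.inr_ne_inl fun hadj => ?_).mono_left (hPT a b h)
    rcases Sym2.mem_iff.1 (mem_subdivEdge_of_subdiv_adj hadj.symm) with rfl | rfl
    exacts [hca rfl, hcb rfl]
  · intro a b c d h h' hne
    exact (hdisj _ _ (fun heq => hne (eq_of_subdivMidpoint_eq heq))
      (subdiv_one_not_adj_inr_inr _ _)).mono (hPT a b h) (hPT c d h')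

end Subdivision

/-- If `H` is planar and `F` is non-planar, then no region intersection graph over `H`
contains the 1-subdivision `F^(1)` of `F` as an induced minor. -/
theorem statement4 {α β : Type*} (H : SimpleGraph α) (F : SimpleGraph β)
    (hH : IsPlanar H) (hF : ¬ IsPlanar F) :
    ∀ {γ : Type*} (G : SimpleGraph γ),
      IsRIG G H → ¬ IsInducedMinor (subdiv F 1) G := by
  intro γ G hG hminor
  exact hF (hH.of_isMinor (hG.of_isInducedMinor hminor).isMinor_of_subdiv_one)
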